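/- arXiv:2308.09074 — 4 statements merged into one kernel-verified Lean document; each statement's English description precedes it below -/
import Mathlib

section
/- There exists at most one sequence of elements A_k ∈ QMod (k ≥ 0) satisfying: (a) A_k has weight 2k and (d/dG_2) A_k = 2 A_{k−1} (with A_{−1} := 0); (b) for each n ≥ 0 there is a polynomial p_n of degree ≤ 2n with [A_k]_{q^n} = p_n(k)/((−4)^k (2k+1)!!) for all k ≥ n; and (c) A_0 = 1 + O(q). In fact these conditions force A_0 = 1 and determine each A_k inductively. -/
/-!
The difference `D_k = A_k - A'_k` vanishes by strong induction on `k`. If `D_j = 0` for `j < k`,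
then `∂D_k/∂G₂ = 0`, so `D_k` is a modular form of weight `2k` and it suffices to see that its
Fourier coefficients of index `n ≤ k/6` vanish. The polynomials `p_n` and `p'_n` describing the
`n`-th coefficients of `A` and `A'` agree at the `k - n > 2n` integers `n ≤ j < k`, hence
coincide since their degrees are at most `2n`; evaluating at `k` gives `[D_k]_{q^n} = 0`.
The same vanishing argument applied to `A_0 - 1` gives `A_0 = 1`.
-/

open MvPolynomial

theorem Polynomial.eq_of_natDegree_le_of_eval_natCast_eq {R : Type*} [CommRing R] [IsDomain R]
    [CharZero R] {p q : Polynomial R} {d a b : ℕ} (hp : p.natDegree ≤ d) (hq : q.natDegree ≤ d)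
    (hab : a + d < b) (h : ∀ j ∈ Finset.Ico a b, p.eval (j : R) = q.eval (j : R)) : p = q :=
  eq_of_natDegree_lt_card_of_eval_eq p q (ι := Finset.Ico a b)
    (Nat.cast_injective.comp Subtype.val_injective) (fun j ↦ h j j.2) (by simp; omega)

namespace MvPolynomial

variable {σ R : Type*} [CommSemiring R] [NoZeroDivisors R] [CharZero R]

theorem notMem_vars_of_pderiv_eq_zero {i : σ} {f : MvPolynomial σ R} (h : pderiv i f = 0) :
    i ∉ f.vars := by
  classical
  intro hi
  obtain ⟨d, hd, hdi⟩ := (mem_vars_iff_mem_support i).1 hi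
  have hle : Finsupp.single i 1 ≤ d :=
    Finsupp.single_le_iff.2 (Nat.one_le_iff_ne_zero.2 (Finsupp.mem_support_iff.1 hdi))
  have hcoeff := coeff_pderiv (i := i) f (d - Finsupp.single i 1)
  rw [h, tsub_add_cancel_of_le hle, coeff_zero, eq_comm] at hcoeff
  exact (mul_eq_zero.1 hcoeff).elim (mem_support_iff.1 hd) (Nat.cast_add_one_ne_zero _)

theorem mem_supported_compl_of_pderiv_eq_zero {i : σ} {f : MvPolynomial σ R}
    (h : pderiv i f = 0) : f ∈ supported R {i}ᶜ := by
  rw [mem_supported]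
  intro j hj
  rintro rfl
  exact notMem_vars_of_pderiv_eq_zero h hj

end MvPolynomial

theorem eq_of_pderiv_eq_of_coeff_eq (Φ : MvPolynomial (Fin 3) ℂ →ₐ[ℂ] PowerSeries ℂ)
    (hvan : ∀ (k : ℕ) (f : MvPolynomial (Fin 3) ℂ),
      f ∈ weightedHomogeneousSubmodule ℂ (![2, 4, 6] : Fin 3 → ℕ) k →
      f ∈ Algebra.adjoin ℂ {X 1, X 2} →
      (∀ ℓ : ℕ, ℓ ≤ k / 12 → PowerSeries.coeff (R := ℂ) ℓ (Φ f) = 0) → f = 0)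
    {w : ℕ} {f g : MvPolynomial (Fin 3) ℂ}
    (hf : f ∈ weightedHomogeneousSubmodule ℂ (![2, 4, 6] : Fin 3 → ℕ) w)
    (hg : g ∈ weightedHomogeneousSubmodule ℂ (![2, 4, 6] : Fin 3 → ℕ) w)
    (hfg : pderiv 0 f = pderiv 0 g)
    (hcoeff : ∀ ℓ ≤ w / 12, PowerSeries.coeff ℓ (Φ f) = PowerSeries.coeff ℓ (Φ g)) :
    f = g := by
  have hX : (X '' {0}ᶜ : Set (MvPolynomial (Fin 3) ℂ)) = {X 1, X 2} := by
    rw [show ({0}ᶜ : Set (Fin 3)) = {1, 2} by ext i; fin_cases i <;> simp]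
    simp [Set.image_insert_eq]
  rw [← sub_eq_zero]
  refine hvan w _ (Submodule.sub_mem _ hf hg) ?_ fun ℓ hℓ ↦ ?_
  · rw [← hX, ← supported_eq_adjoin_X (R := ℂ)]
    exact mem_supported_compl_of_pderiv_eq_zero (by rw [map_sub, hfg, sub_self])
  · rw [map_sub, map_sub, hcoeff ℓ hℓ, sub_self]

def HasPolynomialCoeffs (F : ℕ → PowerSeries ℂ) : Prop :=
  ∀ n : ℕ, ∃ p : Polynomial ℂ, p.natDegree ≤ 2 * n ∧
    ∀ k : ℕ, n ≤ k → PowerSeries.coeff n (F k) =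
      Polynomial.eval (k : ℂ) p / ((-4 : ℂ) ^ k * (Nat.doubleFactorial (2 * k + 1) : ℂ))

theorem HasPolynomialCoeffs.coeff_eq {F F' : ℕ → PowerSeries ℂ} (hF : HasPolynomialCoeffs F)
    (hF' : HasPolynomialCoeffs F') {k n : ℕ} (hlt : ∀ j < k, F j = F' j) (hn : 3 * n < k) :
    PowerSeries.coeff n (F k) = PowerSeries.coeff n (F' k) := by
  obtain ⟨p, hp, hpF⟩ := hF n
  obtain ⟨p', hp', hpF'⟩ := hF' n
  have hpp' : p = p' := by
    refine Polynomial.eq_of_natDegree_le_of_eval_natCast_eq hp hp' (a := n) (b := k)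
      (by omega) fun j hj ↦ ?_
    obtain ⟨hnj, hjk⟩ := Finset.mem_Ico.1 hj
    have hD : (-4 : ℂ) ^ j * (Nat.doubleFactorial (2 * j + 1) : ℂ) ≠ 0 :=
      mul_ne_zero (pow_ne_zero _ (by norm_num)) (Nat.cast_ne_zero.2 (Nat.doubleFactorial_pos _).ne')
    rw [← div_left_inj' hD]
    rw [← hpF j hnj, ← hpF' j hnj, hlt j hjk]
  rw [hpF k (by omega), hpF' k (by omega), hpp']

/-- Uniqueness of the series `A_k`: modelling `QMod = ℂ[G₂,G₄,G₆]` as the polynomial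
ring `ℂ[X₀,X₁,X₂]` with weights `2,4,6`, `Φ` the `q`-expansion algebra homomorphism,
and assuming the vanishing lemma for modular forms (elements of `ℂ[G₄,G₆]`), any two
sequences `A, A'` satisfying (a) weight `2k` and `(d/dG₂) A_k = 2 A_(k-1)` (with
`A_(-1)=0`), (b) the polynomiality of Fourier coefficients
`[A_k]_(q^n) = p_n(k) / ((-4)^k (2k+1)!!)` for `k ≥ n` with `deg p_n ≤ 2n`, and
(c) `A₀ = 1 + O(q)`, coincide; moreover the conditions force `A₀ = 1`. -/
theorem stmt_6
    (Φ : MvPolynomial (Fin 3) ℂ →ₐ[ℂ] PowerSeries ℂ)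
    (hvan : ∀ (k : ℕ) (f : MvPolynomial (Fin 3) ℂ),
      f ∈ weightedHomogeneousSubmodule ℂ (![2, 4, 6] : Fin 3 → ℕ) k →
      f ∈ Algebra.adjoin ℂ {X 1, X 2} →
      (∀ ℓ : ℕ, ℓ ≤ k / 12 → PowerSeries.coeff (R := ℂ) ℓ (Φ f) = 0) → f = 0)
    (A A' : ℕ → MvPolynomial (Fin 3) ℂ)
    (hwt : ∀ k, A k ∈ weightedHomogeneousSubmodule ℂ (![2, 4, 6] : Fin 3 → ℕ) (2 * k))
    (hd0 : pderiv 0 (A 0) = 0)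
    (hd : ∀ k : ℕ, pderiv 0 (A (k + 1)) = 2 * A k)
    (hb : ∀ n : ℕ, ∃ p : Polynomial ℂ, p.natDegree ≤ 2 * n ∧
      ∀ k : ℕ, n ≤ k → PowerSeries.coeff (R := ℂ) n (Φ (A k)) =
        Polynomial.eval (k : ℂ) p /
          ((-4 : ℂ) ^ k * (Nat.doubleFactorial (2 * k + 1) : ℂ)))
    (hc : PowerSeries.coeff (R := ℂ) 0 (Φ (A 0)) = 1)
    (hwt' : ∀ k, A' k ∈ weightedHomogeneousSubmodule ℂ (![2, 4, 6] : Fin 3 → ℕ) (2 * k))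
    (hd0' : pderiv 0 (A' 0) = 0)
    (hd' : ∀ k : ℕ, pderiv 0 (A' (k + 1)) = 2 * A' k)
    (hb' : ∀ n : ℕ, ∃ p : Polynomial ℂ, p.natDegree ≤ 2 * n ∧
      ∀ k : ℕ, n ≤ k → PowerSeries.coeff (R := ℂ) n (Φ (A' k)) =
        Polynomial.eval (k : ℂ) p /
          ((-4 : ℂ) ^ k * (Nat.doubleFactorial (2 * k + 1) : ℂ)))
    (hc' : PowerSeries.coeff (R := ℂ) 0 (Φ (A' 0)) = 1) :
    A 0 = 1 ∧ ∀ k, A k = A' k := by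
  have hA0 : A 0 = 1 := by
    refine eq_of_pderiv_eq_of_coeff_eq Φ hvan (hwt 0)
      ((mem_weightedHomogeneousSubmodule _ _ _ _).2 (isWeightedHomogeneous_one ℂ _))
      (by rw [hd0, pderiv_one]) fun ℓ hℓ ↦ ?_
    obtain rfl : ℓ = 0 := by omega
    rw [hc, map_one, PowerSeries.coeff_one, if_pos rfl]
  refine ⟨hA0, fun k ↦ ?_⟩
  induction k using Nat.strong_induction_on with
  | _ k IH =>
    refine eq_of_pderiv_eq_of_coeff_eq Φ hvan (hwt k) (hwt' k) ?_ fun ℓ hℓ ↦ ?_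
    · cases k with
      | zero => rw [hd0, hd0']
      | succ k => rw [hd, hd', IH k k.lt_succ_self]
    · rcases Nat.eq_zero_or_pos k with rfl | hk
      · obtain rfl : ℓ = 0 := by omega
        rw [hc, hc']
      · exact HasPolynomialCoeffs.coeff_eq (F := fun k ↦ Φ (A k)) hb hb'
          (fun j hj ↦ congrArg Φ (IH j hj)) (by omega)
end

section
/- Let f be a modular form of weight k (a weight-k element of the subalgebra ℂ[G_4, G_6] ⊂ QMod). If the Fourier coefficients [f]_{q^ℓ} vanish for all ℓ ≤ ⌊k/12⌋, then f = 0. -/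
/-!
With `α = 1/240`, `β = -1/504` the constant terms of `G₄, G₆`, the weight-12 polynomial
`disc α β = β² X₀³ - α³ X₁²` (a multiple of `Δ`) vanishes at `(α, β)`, and its `q`-expansion is
`q` times a unit. If `f = P(G₄, G₆)` has vanishing constant term then `P(α, β) = 0`, which forces
`disc α β ∣ P` with a quotient of weight `k - 12` (and `P = 0` when `k < 12`). Dividing `f` by
`q · unit` lowers both the weight by 12 and the order of vanishing by one, so induction on `k`
concludes.
-/

open MvPolynomial

/-- The Eisenstein series `G₄ = 1/240 + Σ σ₃(n) qⁿ` as a formal power series. -/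
noncomputable def stmt7G4 : PowerSeries ℂ :=
  PowerSeries.mk fun n => if n = 0 then 1 / 240 else (ArithmeticFunction.sigma 3 n : ℂ)

/-- The Eisenstein series `G₆ = -1/504 + Σ σ₅(n) qⁿ` as a formal power series. -/
noncomputable def stmt7G6 : PowerSeries ℂ :=
  PowerSeries.mk fun n => if n = 0 then -1 / 504 else (ArithmeticFunction.sigma 5 n : ℂ)

namespace MvPolynomial.IsWeightedHomogeneous

variable {R M σ : Type*} [AddCommMonoid M] {w : σ → M} {m n : M}

section CommSemiring

variable [CommSemiring R] {φ ψ : MvPolynomial σ R}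

theorem mul_eq_zero_of_forall_weight_ne (hφ : IsWeightedHomogeneous w φ m)
    (hφψ : IsWeightedHomogeneous w (φ * ψ) n)
    (hψ : ∀ d ∈ ψ.support, m + Finsupp.weight w d ≠ n) : φ * ψ = 0 := by
  classical
  refine support_eq_empty.mp (Finset.eq_empty_of_forall_notMem fun d hd ↦ ?_)
  obtain ⟨d₁, hd₁, d₂, hd₂, rfl⟩ := Finset.mem_add.mp (support_mul φ ψ hd)
  have := hφψ (mem_support_iff.mp hd)
  rw [map_add, hφ (mem_support_iff.mp hd₁)] at this
  exact hψ d₂ hd₂ this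

end CommSemiring

theorem mul_weightedHomogeneousComponent [CommRing R] [IsLeftCancelAdd M]
    {φ ψ : MvPolynomial σ R} {j : M} (hφ : IsWeightedHomogeneous w φ m)
    (hφψ : IsWeightedHomogeneous w (φ * ψ) (m + j)) :
    φ * ψ = φ * weightedHomogeneousComponent w j ψ := by
  classical
  rw [← sub_eq_zero, ← mul_sub]
  refine hφ.mul_eq_zero_of_forall_weight_ne
    (by
      rw [mul_sub]
      exact hφψ.sub (hφ.mul (weightedHomogeneousComponent_isWeightedHomogeneous j ψ)))
    fun d hd hw ↦ mem_support_iff.mp hd ?_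
  rw [coeff_sub, coeff_weightedHomogeneousComponent, if_pos (add_left_cancel hw), sub_self]

end MvPolynomial.IsWeightedHomogeneous

namespace PowerSeries

theorem X_pow_dvd_of_X_pow_succ_dvd_X_mul {K : Type*} [Field K] {u f : PowerSeries K}
    (hu : constantCoeff u ≠ 0) {n : ℕ} (h : X ^ (n + 1) ∣ X * u * f) : X ^ n ∣ f := by
  rw [pow_succ', mul_assoc, mul_dvd_mul_iff_left X_ne_zero] at h
  exact (isUnit_iff_constantCoeff.mpr hu.isUnit).dvd_mul_left.mp h

theorem constantCoeff_aeval {R σ : Type*} [CommSemiring R] (g : σ → PowerSeries R)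
    (P : MvPolynomial σ R) :
    constantCoeff (MvPolynomial.aeval g P) = eval (fun i ↦ constantCoeff (g i)) P := by
  have : (constantCoeff (R := R)).comp (algebraMap R (PowerSeries R)) = RingHom.id R := by
    ext; simp
  rw [map_aeval, this]
  rfl

end PowerSeries

namespace Sturm

variable {K : Type*} [Field K]

noncomputable def disc (α β : K) : MvPolynomial (Fin 2) K :=
  C (β ^ 2) * X 0 ^ 3 - C (α ^ 3) * X 1 ^ 2

theorem isWeightedHomogeneous_disc (α β : K) :
    IsWeightedHomogeneous ![4, 6] (disc α β) 12 := by
  refine IsWeightedHomogeneous.sub ?_ ?_ <;>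
  · rw [C_mul_X_pow_eq_monomial]
    apply isWeightedHomogeneous_monomial
    simp [Finsupp.weight_apply, Finsupp.sum_single_index]

theorem eval_disc (α β : K) : eval ![α, β] (disc α β) = 0 := by
  simp only [disc, map_sub, map_mul, map_pow, eval_C, eval_X, Matrix.cons_val_zero,
    Matrix.cons_val_one, Matrix.cons_val_fin_one]
  ring

theorem monomial_fin_two (d : Fin 2 →₀ ℕ) (r : K) :
    monomial d r = C r * (X 0 ^ d 0 * X 1 ^ d 1) := by
  rw [monomial_eq, Finsupp.prod_fintype _ _ fun _ ↦ pow_zero _, Fin.prod_univ_two]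

theorem weight_four_six (d : Fin 2 →₀ ℕ) : Finsupp.weight ![4, 6] d = 4 * d 0 + 6 * d 1 := by
  simp [Finsupp.weight_apply, Finsupp.sum_fintype, Fin.sum_univ_two, mul_comm]

-- Modulo `disc α β`, the factor `α³ X₁²` may be traded for `β² X₀³`.
theorem disc_dvd_exchange (α β : K) (a ε t : ℕ) :
    disc α β ∣ C (α ^ (a + 3 * t) * β ^ ε) * (X 0 ^ a * X 1 ^ (ε + 2 * t))
      - C (α ^ a * β ^ (ε + 2 * t)) * (X 0 ^ (a + 3 * t) * X 1 ^ ε) := by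
  have h := (sub_dvd_pow_sub_pow (C (β ^ 2) * X 0 ^ 3 : MvPolynomial (Fin 2) K)
    (C (α ^ 3) * X 1 ^ 2) t).mul_left (-(C (α ^ a * β ^ ε) * X 0 ^ a * X 1 ^ ε))
  refine h.trans (dvd_of_eq ?_)
  simp only [map_mul, map_pow]
  ring

theorem disc_dvd_of_eval_eq_zero {α β : K} (hα : α ≠ 0) (hβ : β ≠ 0) {k : ℕ}
    {P : MvPolynomial (Fin 2) K} (hP : IsWeightedHomogeneous ![4, 6] P k)
    (h0 : eval ![α, β] P = 0) : disc α β ∣ P := by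
  -- `X₀ ^ a * X₁ ^ ε` is the unique monomial of weight `k` with `ε ≤ 1`; by `disc_dvd_exchange`
  -- every monomial of weight `k` is congruent to a multiple of it.
  set ε := k / 2 % 2
  set a := (k - 6 * ε) / 4
  suffices h : disc α β ∣ C (α ^ a * β ^ ε) * P - C (eval ![α, β] P) * (X 0 ^ a * X 1 ^ ε) by
    rwa [h0, map_zero, zero_mul, sub_zero,
      ((mul_ne_zero (pow_ne_zero _ hα) (pow_ne_zero _ hβ)).isUnit.map C).dvd_mul_left] at h
  clear h0
  induction hP using IsWeightedHomogeneous.induction_on with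
  | zero => simp
  | add p q _ _ hp hq =>
    convert dvd_add hp hq using 1
    simp only [map_add]
    ring
  | monomial d r hd =>
    rw [weight_four_six] at hd
    have h := (disc_dvd_exchange α β (d 0) (d 1 % 2) (d 1 / 2)).mul_left (C r)
    rw [Nat.mod_add_div, show d 0 + 3 * (d 1 / 2) = a by omega, show d 1 % 2 = ε by omega] at h
    convert h using 1
    rw [eval_monomial, monomial_fin_two]
    simp only [C_mul, C_pow, Finsupp.prod_pow, Fin.prod_univ_two, Matrix.cons_val_zero,
      Matrix.cons_val_one, Matrix.cons_val_fin_one]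
    ring

variable {g : Fin 2 → PowerSeries K}

theorem aeval_disc (α β : K) :
    aeval g (disc α β) = PowerSeries.C (β ^ 2) * g 0 ^ 3 - PowerSeries.C (α ^ 3) * g 1 ^ 2 := by
  simp [disc]

theorem exists_aeval_disc_eq_X_mul {α β : K} (hα : α ≠ 0) (hβ : β ≠ 0)
    (hg : (fun i ↦ PowerSeries.constantCoeff (g i)) = ![α, β])
    (hΔ : 3 * β * PowerSeries.coeff 1 (g 0) ≠ 2 * α * PowerSeries.coeff 1 (g 1)) :
    ∃ u, PowerSeries.constantCoeff u ≠ 0 ∧ aeval g (disc α β) = PowerSeries.X * u := by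
  obtain ⟨u, hu⟩ : PowerSeries.X ∣ aeval g (disc α β) := by
    rw [PowerSeries.X_dvd_iff, PowerSeries.constantCoeff_aeval, hg, eval_disc]
  refine ⟨u, ?_, hu⟩
  have h1 := congrArg (PowerSeries.coeff 1) hu
  have h0 := congrFun hg
  simp only [Fin.forall_fin_two, Matrix.cons_val_zero, Matrix.cons_val_one] at h0
  rw [← PowerSeries.coeff_zero_eq_constantCoeff_apply, ← PowerSeries.coeff_succ_X_mul, ← h1,
    aeval_disc, map_sub, PowerSeries.coeff_C_mul, PowerSeries.coeff_C_mul,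
    PowerSeries.coeff_one_pow, PowerSeries.coeff_one_pow, h0.1, h0.2]
  have : α ^ 2 * β * (3 * β * PowerSeries.coeff 1 (g 0) - 2 * α * PowerSeries.coeff 1 (g 1)) ≠ 0 :=
    mul_ne_zero (mul_ne_zero (pow_ne_zero _ hα) hβ) (sub_ne_zero.mpr hΔ)
  convert this using 1
  push_cast
  ring

theorem aeval_eq_zero_of_X_pow_dvd {α β : K} (hα : α ≠ 0) (hβ : β ≠ 0)
    (hg : (fun i ↦ PowerSeries.constantCoeff (g i)) = ![α, β])
    (hΔ : 3 * β * PowerSeries.coeff 1 (g 0) ≠ 2 * α * PowerSeries.coeff 1 (g 1))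
    (k : ℕ) {P : MvPolynomial (Fin 2) K} (hP : IsWeightedHomogeneous ![4, 6] P k)
    (hdvd : PowerSeries.X ^ (k / 12 + 1) ∣ aeval g P) : aeval g P = 0 := by
  induction k using Nat.strong_induction_on generalizing P with
  | _ k ih =>
  have hP0 : eval ![α, β] P = 0 := by
    rw [← hg, ← PowerSeries.constantCoeff_aeval, ← PowerSeries.X_dvd_iff]
    exact (dvd_pow_self _ (k / 12).succ_ne_zero).trans hdvd
  obtain ⟨Q, rfl⟩ := disc_dvd_of_eval_eq_zero hα hβ hP hP0
  obtain hk | ⟨j, rfl⟩ : k < 12 ∨ ∃ j, k = 12 + j :=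
    (lt_or_ge k 12).imp_right fun hk ↦ ⟨k - 12, by omega⟩
  · rw [(isWeightedHomogeneous_disc α β).mul_eq_zero_of_forall_weight_ne hP
      fun _ _ ↦ by omega, map_zero]
  · rw [(isWeightedHomogeneous_disc α β).mul_weightedHomogeneousComponent hP] at hdvd ⊢
    obtain ⟨u, hu, hD⟩ := exists_aeval_disc_eq_X_mul hα hβ hg hΔ
    rw [map_mul, hD] at hdvd ⊢
    rw [show (12 + j) / 12 + 1 = j / 12 + 1 + 1 by omega] at hdvd
    rw [ih j (by omega) (weightedHomogeneousComponent_isWeightedHomogeneous j Q)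
      (PowerSeries.X_pow_dvd_of_X_pow_succ_dvd_X_mul hu hdvd), mul_zero]

end Sturm

/-- Let `f` be a modular form of weight `k` for `SL₂(ℤ)`, i.e. a weighted homogeneous
polynomial of weight `k` in `G₄, G₆` (weights `4` and `6`), identified with its
`q`-expansion.  If the Fourier coefficients `[f]_{q^ℓ}` vanish for all `ℓ ≤ ⌊k/12⌋`,
then `f = 0`. -/
theorem stmt_7 (k : ℕ) (P : MvPolynomial (Fin 2) ℂ)
    (hP : P ∈ weightedHomogeneousSubmodule ℂ (![4, 6] : Fin 2 → ℕ) k)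
    (f : PowerSeries ℂ) (hf : f = aeval ![stmt7G4, stmt7G6] P)
    (hvan : ∀ ℓ : ℕ, ℓ ≤ k / 12 → PowerSeries.coeff ℓ f = 0) :
    f = 0 := by
  subst hf
  refine Sturm.aeval_eq_zero_of_X_pow_dvd (α := 1 / 240) (β := -1 / 504) (by norm_num)
    (by norm_num) ?_ ?_ k hP (PowerSeries.X_pow_dvd_iff.mpr fun ℓ hℓ ↦ hvan ℓ (by omega))
  · funext i
    fin_cases i <;> simp [stmt7G4, stmt7G6]
  · norm_num [stmt7G4, stmt7G6, ArithmeticFunction.sigma_apply]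
end

section
/- Consider a formal power series in q with coefficients formal Laurent series in p of the form F(p,q) = (1 + Σ_{j≥1} a_{0j} p^j) + q·(Σ_{j≥−1} a_{1j} p^j) + q²·(Σ_{j≥−2} a_{2j} p^j) + ⋯, i.e. the q^i-coefficient is a Laurent series in p with pole order at most i and the q^0-coefficient has constant term 1. Then for each n ≥ 0 there exists a polynomial P_n(k) of degree at most 2n such that for all k ≥ 0, the coefficient of p^0 q^n in F(p,q)^k equals P_n(k). -/
/-!
Give the monomial `p ^ j * q ^ i` the weight `j + 2 * i`. Then every monomial of `G := F - 1` has
weight at least `1`, so every monomial of `G ^ m` has weight at least `m`, and the coefficient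
`c m` of `p ^ 0 * q ^ n` (weight `2 * n`) in `G ^ m` vanishes for `m > 2 * n`. Expanding
`F ^ k = (1 + G) ^ k` binomially, the `p ^ 0 * q ^ n` coefficient of `F ^ k` is
`∑_{m ≤ 2n} (k choose m) * c m`, a polynomial in `k` of degree at most `2 * n`.
-/

open Finset Polynomial

variable {R : Type*}

/-- Every monomial `p ^ j * q ^ i` occurring in `G` has weight `j + s * i ≥ w`. -/
def HasWeightAtLeast [Semiring R] (s w : ℤ) (G : PowerSeries (LaurentSeries R)) : Prop :=
  ∀ (i : ℕ) (j : ℤ), j + s * i < w → (PowerSeries.coeff i G).coeff j = 0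

namespace HasWeightAtLeast

variable [Semiring R] {s : ℤ}

theorem one : HasWeightAtLeast s 0 (1 : PowerSeries (LaurentSeries R)) := by
  intro i j hij
  rw [PowerSeries.coeff_one]
  split_ifs with hi
  · subst hi
    rw [HahnSeries.coeff_one, if_neg (by omega)]
  · rfl

theorem mul {a b : ℤ} {G H : PowerSeries (LaurentSeries R)} (hG : HasWeightAtLeast s a G)
    (hH : HasWeightAtLeast s b H) : HasWeightAtLeast s (a + b) (G * H) := by
  intro i j hij
  rw [PowerSeries.coeff_mul, HahnSeries.coeff_sum]
  refine sum_eq_zero fun ⟨i₁, i₂⟩ hi => ?_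
  rw [HahnSeries.coeff_mul]
  refine sum_eq_zero fun ⟨j₁, j₂⟩ hj => ?_
  rw [HasAntidiagonal.mem_antidiagonal] at hi
  have hj : j₁ + j₂ = j := (Finset.mem_antidiagonal.1 hj).2.2
  by_cases h₁ : j₁ + s * i₁ < a
  · rw [hG i₁ j₁ h₁, zero_mul]
  · have h₂ : j₂ + s * i₂ < b := by
      subst hi hj
      push_cast at hij
      linarith
    rw [hH i₂ j₂ h₂, mul_zero]

theorem pow {w : ℤ} {G : PowerSeries (LaurentSeries R)} (hG : HasWeightAtLeast s w G) (m : ℕ) :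
    HasWeightAtLeast s (m * w) (G ^ m) := by
  induction m with
  | zero => simpa using one
  | succ m ih => simpa [pow_succ, add_mul] using ih.mul hG

end HasWeightAtLeast

theorem hasWeightAtLeast_sub_one [Ring R] {F : PowerSeries (LaurentSeries R)}
    (hsupp : ∀ (i : ℕ) (j : ℤ), j < -(i : ℤ) → (PowerSeries.coeff i F).coeff j = 0)
    (hconst : (PowerSeries.coeff 0 F).coeff 0 = 1) :
    HasWeightAtLeast 2 1 (F - 1) := by
  intro i j hij
  rw [map_sub, HahnSeries.coeff_sub, PowerSeries.coeff_one]
  split_ifs with hi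
  · subst hi
    obtain hj | rfl : j < 0 ∨ j = 0 := by push_cast at hij; omega
    · rw [hsupp 0 j (by simpa using hj), HahnSeries.coeff_one, if_neg hj.ne, sub_zero]
    · rw [hconst, HahnSeries.coeff_one, if_pos rfl, sub_self]
  · rw [hsupp i j (by omega), HahnSeries.coeff_zero, sub_zero]

theorem map_one_add_pow {A M : Type*} [CommSemiring A] [AddCommMonoid M] (φ : A →+ M) (G : A)
    (k : ℕ) : φ ((1 + G) ^ k) = ∑ m ∈ range (k + 1), k.choose m • φ (G ^ m) := by
  rw [add_comm, add_pow, map_sum]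
  refine sum_congr rfl fun m _ => ?_
  rw [one_pow, mul_one, ← nsmul_eq_mul', map_nsmul]

theorem exists_natDegree_le_eval_eq_sum_choose_mul {K : Type*} [Field K] [CharZero K]
    (c : ℕ → K) {d : ℕ} (hc : ∀ m, d < m → c m = 0) :
    ∃ P : K[X], P.natDegree ≤ d ∧
      ∀ k : ℕ, P.eval (k : K) = ∑ m ∈ range (k + 1), (k.choose m : K) * c m := by
  refine ⟨∑ m ∈ range (d + 1), C (c m / m.factorial) * descPochhammer K m, ?_, fun k => ?_⟩
  · refine natDegree_sum_le_of_forall_le _ _ fun m hm => ?_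
    refine (natDegree_C_mul_le _ _).trans ?_
    rw [descPochhammer_natDegree]
    exact Nat.lt_succ_iff.1 (mem_range.1 hm)
  · have hk : ∀ m ≥ k + 1, (k.choose m : K) * c m = 0 := fun m hm => by
      rw [Nat.choose_eq_zero_of_lt hm, Nat.cast_zero, zero_mul]
    have hd : ∀ m ≥ d + 1, (k.choose m : K) * c m = 0 := fun m hm => by rw [hc m hm, mul_zero]
    rw [eval_finsetSum, ← eventually_constant_sum hk (le_max_right (d + 1) _),
      eventually_constant_sum hd (le_max_left _ _)]
    refine sum_congr rfl fun m _ => ?_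
    rw [eval_mul, eval_C, Nat.cast_choose_eq_descPochhammer_div]
    ring

/-- Let `F ∈ ℚ((p))[[q]]` be such that the `q^i`-coefficient is a Laurent series in `p`
with pole order at most `i`, and the `q⁰`-coefficient has constant term `1`.  Then for
each `n ≥ 0` there is a polynomial `P_n` of degree at most `2n` such that the
coefficient of `p⁰ qⁿ` in `F^k` equals `P_n(k)` for all `k ≥ 0`. -/
theorem stmt_8 (F : PowerSeries (LaurentSeries ℚ))
    (hsupp : ∀ (i : ℕ) (j : ℤ), j < -(i : ℤ) →
      (PowerSeries.coeff (R := LaurentSeries ℚ) i F).coeff j = 0)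
    (hconst : (PowerSeries.coeff (R := LaurentSeries ℚ) 0 F).coeff 0 = 1) :
    ∀ n : ℕ, ∃ P : Polynomial ℚ, P.natDegree ≤ 2 * n ∧
      ∀ k : ℕ, (PowerSeries.coeff (R := LaurentSeries ℚ) n (F ^ k)).coeff 0 =
        Polynomial.eval (k : ℚ) P := by
  intro n
  let G := F - 1
  let coeffPQ : PowerSeries (LaurentSeries ℚ) →+ ℚ :=
    (HahnSeries.coeff.addMonoidHom 0).comp (PowerSeries.coeff n).toAddMonoidHom
  have hvanish (m : ℕ) (hm : 2 * n < m) : coeffPQ (G ^ m) = 0 :=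
    (hasWeightAtLeast_sub_one hsupp hconst).pow m n 0 (by omega)
  obtain ⟨P, hdeg, hP⟩ := exists_natDegree_le_eval_eq_sum_choose_mul _ hvanish
  refine ⟨P, hdeg, fun k => ?_⟩
  rw [hP, show F = 1 + G by ring]
  exact (map_one_add_pow coeffPQ G k).trans (sum_congr rfl fun m _ => nsmul_eq_mul _ _)
end

section
/- The series B_0 = −2G_2² + (5/6)G_4 satisfies B_0 = q·(d/dq)G_2, where G_2 = −1/24 + Σ_{n≥1} σ_1(n) q^n and G_4 = 1/240 + Σ_{n≥1} σ_3(n) q^n, with σ_k(n) = Σ_{d|n} d^k. -/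
/-!
Comparing coefficients, the identity is Besge's formula
`∑_{k+l=n} σ(k)σ(l) = (5σ₃(n) + (1 - 6n)σ(n))/12`, proved here by Liouville's elementary method.
The left side is `∑ ab` over the quadruples of positive integers with `ax + by = n`, i.e.
`(∑ (a+b)² - ∑ (a-b)²)/4`. Exchanging `(a, x)` with `(b, y)` and Liouville's bijection
`(a, x, b, y) ↦ (a + b, x, b, y - x)` from the quadruples with `x < y` onto those with `b < a`
reduce both sums of squares to sums over the diagonals `x = y` and `a = b`; on these the quadruples
are parametrised by a divisor `d` of `n` and `1 ≤ a < d`, giving explicit divisor sums.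
-/

/-- `G₂ = −1/24 + Σ σ₁(n) qⁿ`. -/
noncomputable def stmt12G2 : PowerSeries ℚ :=
  PowerSeries.mk fun n => if n = 0 then -1 / 24 else (ArithmeticFunction.sigma 1 n : ℚ)

/-- `G₄ = 1/240 + Σ σ₃(n) qⁿ`. -/
noncomputable def stmt12G4 : PowerSeries ℚ :=
  PowerSeries.mk fun n => if n = 0 then 1 / 240 else (ArithmeticFunction.sigma 3 n : ℚ)

open Finset ArithmeticFunction
open scoped ArithmeticFunction.sigma

theorem Finset.sum_filter_lt_add_sum_filter_gt_add_sum_filter_eq {ι α M : Type*} [LinearOrder α]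
    [AddCommMonoid M] (s : Finset ι) (u v : ι → α) (f : ι → M) :
    ∑ i ∈ s with u i < v i, f i + ∑ i ∈ s with v i < u i, f i + ∑ i ∈ s with u i = v i, f i =
      ∑ i ∈ s, f i := by
  simp only [sum_filter, ← sum_add_distrib]
  refine sum_congr rfl fun i _ => ?_
  rcases lt_trichotomy (u i) (v i) with h | h | h
  · simp [h, h.not_gt, h.ne]
  · simp [h]
  · simp [h, h.not_gt, h.ne']

theorem Finset.sum_filter_comp_of_involutive {ι M : Type*} [AddCommMonoid M] {s : Finset ι}
    {e : ι → ι} (he : Function.Involutive e) (hs : ∀ i ∈ s, e i ∈ s) (P : ι → Prop)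
    [DecidablePred P] (f : ι → M) :
    ∑ i ∈ s with P (e i), f (e i) = ∑ i ∈ s with P i, f i := by
  refine sum_nbij' e e ?_ ?_ (fun i _ => he i) (fun i _ => he i) fun _ _ => rfl <;>
    simp only [mem_filter, he _] <;> exact fun i hi => ⟨hs i hi.1, hi.2⟩

theorem Finset.sum_range_sq (d : ℕ) :
    ∑ a ∈ range d, (a : ℚ) ^ 2 = d * (d - 1) * (2 * d - 1) / 6 := by
  induction d with
  | zero => simp
  | succ d ih => rw [sum_range_succ, ih]; push_cast; ring

theorem ArithmeticFunction.natCast_sigma_apply (k n : ℕ) :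
    (σ k n : ℚ) = ∑ d ∈ n.divisors, (d : ℚ) ^ k := by
  simp [sigma_apply]

namespace Besge

/-- A quadruple `(a, x, b, y)` is stored as `p = ((a, x), (b, y))`, so `a = p.1.1`, `x = p.1.2`,
`b = p.2.1`, `y = p.2.2`. -/
def quadruples (n : ℕ) : Finset ((ℕ × ℕ) × (ℕ × ℕ)) :=
  {p ∈ (Icc 1 n ×ˢ Icc 1 n) ×ˢ (Icc 1 n ×ˢ Icc 1 n) | p.1.1 * p.1.2 + p.2.1 * p.2.2 = n}

variable {n : ℕ}

theorem mem_quadruples {a x b y : ℕ} :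
    ((a, x), (b, y)) ∈ quadruples n ↔ 0 < a ∧ 0 < x ∧ 0 < b ∧ 0 < y ∧ a * x + b * y = n := by
  simp only [quadruples, mem_filter, mem_product, mem_Icc]
  constructor
  · rintro ⟨⟨⟨⟨ha, -⟩, hx, -⟩, ⟨hb, -⟩, hy, -⟩, h⟩
    exact ⟨ha, hx, hb, hy, h⟩
  · rintro ⟨ha, hx, hb, hy, h⟩
    refine ⟨⟨⟨⟨ha, ?_⟩, hx, ?_⟩, ⟨hb, ?_⟩, hy, ?_⟩, h⟩ <;> nlinarith

theorem swap_mem_quadruples {p : (ℕ × ℕ) × (ℕ × ℕ)} (hp : p ∈ quadruples n) :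
    p.swap ∈ quadruples n := by
  obtain ⟨⟨a, x⟩, b, y⟩ := p
  rw [Prod.swap_prod_mk, mem_quadruples] at *
  omega

theorem map_swap_mem_quadruples {p : (ℕ × ℕ) × (ℕ × ℕ)} (hp : p ∈ quadruples n) :
    Prod.map Prod.swap Prod.swap p ∈ quadruples n := by
  obtain ⟨⟨a, x⟩, b, y⟩ := p
  rw [Prod.map_apply, Prod.swap_prod_mk, Prod.swap_prod_mk, mem_quadruples] at *
  obtain ⟨ha, hx, hb, hy, h⟩ := hp
  exact ⟨hx, ha, hy, hb, by rw [← h]; ring⟩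

theorem sum_filter_swap (P : (ℕ × ℕ) × (ℕ × ℕ) → Prop) [DecidablePred P]
    (f : (ℕ × ℕ) × (ℕ × ℕ) → ℚ) :
    ∑ p ∈ quadruples n with P p.swap, f p.swap = ∑ p ∈ quadruples n with P p, f p :=
  sum_filter_comp_of_involutive Prod.swap_swap (fun _ => swap_mem_quadruples) P f

theorem sum_filter_map_swap (P : (ℕ × ℕ) × (ℕ × ℕ) → Prop) [DecidablePred P]
    (f : (ℕ × ℕ) × (ℕ × ℕ) → ℚ) :
    ∑ p ∈ quadruples n with P (Prod.map Prod.swap Prod.swap p), f (Prod.map Prod.swap Prod.swap p) =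
      ∑ p ∈ quadruples n with P p, f p :=
  sum_filter_comp_of_involutive (Function.Involutive.prodMap Prod.swap_swap Prod.swap_swap)
    (fun _ => map_swap_mem_quadruples) P f

theorem sum_filter_lt_shift (f : (ℕ × ℕ) × (ℕ × ℕ) → ℚ) :
    ∑ p ∈ quadruples n with p.1.2 < p.2.2, f ((p.1.1 + p.2.1, p.1.2), (p.2.1, p.2.2 - p.1.2)) =
      ∑ p ∈ quadruples n with p.2.1 < p.1.1, f p := by
  refine sum_nbij' (fun p => ((p.1.1 + p.2.1, p.1.2), (p.2.1, p.2.2 - p.1.2)))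
    (fun p => ((p.1.1 - p.2.1, p.1.2), (p.2.1, p.2.2 + p.1.2))) ?_ ?_ ?_ ?_ fun _ _ => rfl <;>
    rintro ⟨⟨a, x⟩, b, y⟩ hp <;> simp only [mem_filter, mem_quadruples] at hp ⊢
  · obtain ⟨⟨ha, hx, hb, hy, h⟩, hxy⟩ := hp
    refine ⟨⟨by omega, hx, hb, by omega, ?_⟩, by omega⟩
    obtain ⟨c, rfl⟩ := Nat.exists_eq_add_of_le hxy.le
    rw [← h, Nat.add_sub_cancel_left]; ring
  · obtain ⟨⟨ha, hx, hb, hy, h⟩, hba⟩ := hp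
    refine ⟨⟨by omega, hx, hb, by omega, ?_⟩, by omega⟩
    obtain ⟨c, rfl⟩ := Nat.exists_eq_add_of_le hba.le
    rw [← h, Nat.add_sub_cancel_left]; ring
  · simp only [Prod.mk.injEq, and_true, true_and]; omega
  · simp only [Prod.mk.injEq, and_true, true_and]; omega

theorem sum_filter_snd_eq_snd (f : (ℕ × ℕ) × (ℕ × ℕ) → ℚ) :
    ∑ p ∈ quadruples n with p.1.2 = p.2.2, f p =
      ∑ q ∈ n.divisorsAntidiagonal, ∑ a ∈ Ico 1 q.1, f ((a, q.2), (q.1 - a, q.2)) := by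
  rw [sum_sigma']
  symm
  refine sum_nbij' (fun s => ((s.2, s.1.2), (s.1.1 - s.2, s.1.2)))
    (fun p => ⟨(p.1.1 + p.2.1, p.1.2), p.1.1⟩) ?_ ?_ ?_ ?_ fun _ _ => rfl
  · rintro ⟨⟨d, x⟩, a⟩ hs
    simp only [mem_sigma, Nat.mem_divisorsAntidiagonal, mem_Ico] at hs
    obtain ⟨⟨rfl, hn⟩, ha, had⟩ := hs
    simp only [mem_filter, mem_quadruples, and_true]
    refine ⟨ha, Nat.pos_of_ne_zero (right_ne_zero_of_mul hn), by omega,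
      Nat.pos_of_ne_zero (right_ne_zero_of_mul hn), ?_⟩
    rw [← add_mul, Nat.add_sub_cancel' had.le]
  · rintro ⟨⟨a, x⟩, b, y⟩ hp
    simp only [mem_filter, mem_quadruples] at hp
    obtain ⟨⟨ha, hx, hb, hy, h⟩, rfl⟩ := hp
    simp only [mem_sigma, Nat.mem_divisorsAntidiagonal, mem_Ico]
    have := Nat.mul_pos ha hx
    exact ⟨⟨by rw [← h]; ring, by omega⟩, ha, by omega⟩
  · rintro ⟨⟨d, x⟩, a⟩ hs
    simp only [mem_sigma, mem_Ico] at hs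
    simp only [Nat.add_sub_cancel' hs.2.2.le]
  · rintro ⟨⟨a, x⟩, b, y⟩ hp
    simp only [mem_filter, mem_quadruples] at hp
    simp only [Nat.add_sub_cancel_left, hp.2]

theorem filter_quadruples_eq_product {kl : ℕ × ℕ} (hkl : kl ∈ antidiagonal n) :
    {p ∈ quadruples n | (p.1.1 * p.1.2, p.2.1 * p.2.2) = kl} =
      kl.1.divisorsAntidiagonal ×ˢ kl.2.divisorsAntidiagonal := by
  obtain ⟨k, l⟩ := kl
  rw [HasAntidiagonal.mem_antidiagonal] at hkl
  ext ⟨⟨a, x⟩, b, y⟩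
  simp only [mem_filter, mem_quadruples, mem_product, Nat.mem_divisorsAntidiagonal, Prod.mk.injEq,
    Nat.pos_iff_ne_zero]
  constructor
  · rintro ⟨⟨ha, hx, hb, hy, -⟩, rfl, rfl⟩
    exact ⟨⟨rfl, mul_ne_zero ha hx⟩, rfl, mul_ne_zero hb hy⟩
  · rintro ⟨⟨rfl, hk⟩, rfl, hl⟩
    exact ⟨⟨left_ne_zero_of_mul hk, right_ne_zero_of_mul hk, left_ne_zero_of_mul hl,
      right_ne_zero_of_mul hl, hkl⟩, rfl, rfl⟩

theorem sum_quadruples_mul :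
    ∑ p ∈ quadruples n, (p.1.1 * p.2.1 : ℚ) = ∑ kl ∈ antidiagonal n, (σ 1 kl.1 : ℚ) * σ 1 kl.2 := by
  rw [← sum_fiberwise_of_maps_to (g := fun p => (p.1.1 * p.1.2, p.2.1 * p.2.2))
    (t := antidiagonal n)]
  · refine sum_congr rfl fun kl hkl => ?_
    simp only [filter_quadruples_eq_product hkl, sum_product, natCast_sigma_apply, pow_one,
      sum_mul_sum, ← Nat.sum_divisorsAntidiagonal (fun a _ => (a : ℚ))]
  · rintro ⟨⟨a, x⟩, b, y⟩ hp
    rw [HasAntidiagonal.mem_antidiagonal]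
    exact (mem_quadruples.mp hp).2.2.2.2

theorem sum_quadruples_sub_sq :
    ∑ p ∈ quadruples n, ((p.1.1 : ℚ) - p.2.1) ^ 2 =
      2 * ∑ p ∈ quadruples n with p.1.2 < p.2.2, (p.1.1 : ℚ) ^ 2 := by
  have hswap : ∑ p ∈ quadruples n with p.1.1 < p.2.1, ((p.1.1 : ℚ) - p.2.1) ^ 2 =
      ∑ p ∈ quadruples n with p.2.1 < p.1.1, ((p.1.1 : ℚ) - p.2.1) ^ 2 := by
    rw [← sum_filter_swap (fun p => p.2.1 < p.1.1)]
    exact sum_congr rfl fun _ _ => by simp only [Prod.fst_swap, Prod.snd_swap]; ring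
  have hdiag : ∑ p ∈ quadruples n with p.1.1 = p.2.1, ((p.1.1 : ℚ) - p.2.1) ^ 2 = 0 :=
    sum_eq_zero fun p hp => by rw [(mem_filter.mp hp).2, sub_self, sq, zero_mul]
  have hshift : ∑ p ∈ quadruples n with p.2.1 < p.1.1, ((p.1.1 : ℚ) - p.2.1) ^ 2 =
      ∑ p ∈ quadruples n with p.1.2 < p.2.2, (p.1.1 : ℚ) ^ 2 := by
    rw [← sum_filter_lt_shift]
    push_cast
    simp only [add_sub_cancel_right]
  rw [← sum_filter_lt_add_sum_filter_gt_add_sum_filter_eq _ (fun p => p.1.1) (fun p => p.2.1),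
    hswap, hdiag, hshift]
  ring

theorem sum_quadruples_add_sq :
    ∑ p ∈ quadruples n, ((p.1.1 : ℚ) + p.2.1) ^ 2 =
      2 * ∑ p ∈ quadruples n with p.2.1 < p.1.1, (p.1.1 : ℚ) ^ 2 +
        ∑ p ∈ quadruples n with p.1.2 = p.2.2, ((p.1.1 : ℚ) + p.2.1) ^ 2 := by
  have hswap : ∑ p ∈ quadruples n with p.2.2 < p.1.2, ((p.1.1 : ℚ) + p.2.1) ^ 2 =
      ∑ p ∈ quadruples n with p.1.2 < p.2.2, ((p.1.1 : ℚ) + p.2.1) ^ 2 := by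
    rw [← sum_filter_swap (fun p => p.1.2 < p.2.2)]
    exact sum_congr rfl fun _ _ => by simp only [Prod.fst_swap, Prod.snd_swap]; ring
  have hshift : ∑ p ∈ quadruples n with p.1.2 < p.2.2, ((p.1.1 : ℚ) + p.2.1) ^ 2 =
      ∑ p ∈ quadruples n with p.2.1 < p.1.1, (p.1.1 : ℚ) ^ 2 := by
    rw [← sum_filter_lt_shift]
    push_cast
    rfl
  rw [← sum_filter_lt_add_sum_filter_gt_add_sum_filter_eq _ (fun p => p.1.2) (fun p => p.2.2),
    hswap, hshift]
  ring

theorem sum_filter_lt_sq_sub_sum_filter_lt_sq :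
    ∑ p ∈ quadruples n with p.2.1 < p.1.1, (p.1.1 : ℚ) ^ 2 -
        ∑ p ∈ quadruples n with p.1.2 < p.2.2, (p.1.1 : ℚ) ^ 2 =
      ∑ p ∈ quadruples n with p.1.2 = p.2.2, (p.1.1 : ℚ) ^ 2 -
        ∑ p ∈ quadruples n with p.1.1 = p.2.1, (p.1.1 : ℚ) ^ 2 := by
  have hab := sum_filter_lt_add_sum_filter_gt_add_sum_filter_eq (quadruples n) (fun p => p.1.1)
    (fun p => p.2.1) (fun p => (p.1.1 : ℚ) ^ 2)
  have hxy := sum_filter_lt_add_sum_filter_gt_add_sum_filter_eq (quadruples n) (fun p => p.1.2)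
    (fun p => p.2.2) (fun p => (p.1.1 : ℚ) ^ 2)
  have h : ∑ p ∈ quadruples n with p.1.1 < p.2.1, (p.1.1 : ℚ) ^ 2 =
      ∑ p ∈ quadruples n with p.2.2 < p.1.2, (p.1.1 : ℚ) ^ 2 := calc
    _ = ∑ p ∈ quadruples n with p.2.1 < p.1.1, (p.2.1 : ℚ) ^ 2 :=
      sum_filter_swap (fun p => p.2.1 < p.1.1) (fun p => (p.2.1 : ℚ) ^ 2)
    _ = ∑ p ∈ quadruples n with p.1.2 < p.2.2, (p.2.1 : ℚ) ^ 2 :=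
      (sum_filter_lt_shift (fun p => (p.2.1 : ℚ) ^ 2)).symm
    _ = _ := sum_filter_swap (fun p => p.2.2 < p.1.2) (fun p => (p.1.1 : ℚ) ^ 2)
  linarith

theorem sum_filter_snd_eq_snd_sq :
    ∑ p ∈ quadruples n with p.1.2 = p.2.2, (p.1.1 : ℚ) ^ 2 =
      ∑ d ∈ n.divisors, (d : ℚ) * (d - 1) * (2 * d - 1) / 6 := by
  rw [sum_filter_snd_eq_snd, Nat.sum_divisorsAntidiagonal (fun d _ => ∑ a ∈ Ico 1 d, (a : ℚ) ^ 2)]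
  refine sum_congr rfl fun d hd => ?_
  rw [← sum_range_sq, sum_range_eq_add_Ico _ (Nat.pos_of_mem_divisors hd)]
  simp

theorem sum_filter_snd_eq_snd_add_sq :
    ∑ p ∈ quadruples n with p.1.2 = p.2.2, ((p.1.1 : ℚ) + p.2.1) ^ 2 =
      ∑ d ∈ n.divisors, ((d : ℚ) - 1) * d ^ 2 := by
  rw [sum_filter_snd_eq_snd,
    Nat.sum_divisorsAntidiagonal (fun d _ => ∑ a ∈ Ico 1 d, ((a : ℚ) + (d - a : ℕ)) ^ 2)]
  refine sum_congr rfl fun d hd => ?_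
  have hd : 1 ≤ d := Nat.pos_of_mem_divisors hd
  rw [sum_congr rfl fun a ha => by rw [Nat.cast_sub (mem_Ico.mp ha).2.le, add_sub_cancel],
    sum_const, Nat.card_Ico, nsmul_eq_mul, Nat.cast_sub hd, Nat.cast_one]

theorem sum_filter_fst_eq_fst_sq :
    ∑ p ∈ quadruples n with p.1.1 = p.2.1, (p.1.1 : ℚ) ^ 2 =
      ∑ d ∈ n.divisors, (n * (d : ℚ) - d ^ 2) := calc
  _ = ∑ p ∈ quadruples n with p.1.2 = p.2.2, (p.1.2 : ℚ) ^ 2 :=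
    sum_filter_map_swap (fun p => p.1.2 = p.2.2) (fun p => (p.1.2 : ℚ) ^ 2)
  _ = ∑ q ∈ n.divisorsAntidiagonal, (n * (q.2 : ℚ) - q.2 ^ 2) := by
    rw [sum_filter_snd_eq_snd]
    refine sum_congr rfl fun q hq => ?_
    have hn : (q.1 * q.2 : ℚ) = n := mod_cast (Nat.mem_divisorsAntidiagonal.mp hq).1
    dsimp only
    have hd : 1 ≤ q.1 := Nat.pos_of_mem_divisors (Nat.fst_mem_divisors_of_mem_antidiagonal hq)
    rw [sum_const, Nat.card_Ico, nsmul_eq_mul, Nat.cast_sub hd, ← hn]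
    ring
  _ = _ := Nat.sum_divisorsAntidiagonal' (fun _ d => (n * (d : ℚ) - d ^ 2))

theorem sum_quadruples_mul_eq_sum_divisors :
    ∑ p ∈ quadruples n, (p.1.1 * p.2.1 : ℚ) =
      ∑ d ∈ n.divisors, (5 * (d : ℚ) ^ 3 + d - 6 * n * d) / 12 := by
  have hpolar : ∑ p ∈ quadruples n, (p.1.1 * p.2.1 : ℚ) =
      (∑ p ∈ quadruples n, ((p.1.1 : ℚ) + p.2.1) ^ 2 -
        ∑ p ∈ quadruples n, ((p.1.1 : ℚ) - p.2.1) ^ 2) / 4 := by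
    rw [← sum_sub_distrib, sum_div]
    exact sum_congr rfl fun _ _ => by ring
  have hdiag := sum_filter_lt_sq_sub_sum_filter_lt_sq (n := n)
  rw [sum_filter_snd_eq_snd_sq, sum_filter_fst_eq_fst_sq] at hdiag
  have hcombine : ∑ d ∈ n.divisors, (5 * (d : ℚ) ^ 3 + d - 6 * n * d) / 12 =
      (2 * (∑ d ∈ n.divisors, (d : ℚ) * (d - 1) * (2 * d - 1) / 6 -
        ∑ d ∈ n.divisors, (n * (d : ℚ) - d ^ 2)) +
        ∑ d ∈ n.divisors, ((d : ℚ) - 1) * d ^ 2) / 4 := by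
    rw [← sum_sub_distrib, mul_sum, ← sum_add_distrib, sum_div]
    exact sum_congr rfl fun _ _ => by ring
  rw [hpolar, sum_quadruples_add_sq, sum_quadruples_sub_sq, sum_filter_snd_eq_snd_add_sq, hcombine,
    ← hdiag]
  ring

end Besge

open Besge in
theorem sum_antidiagonal_sigma_one_mul_sigma_one (n : ℕ) :
    ∑ kl ∈ antidiagonal n, (σ 1 kl.1 : ℚ) * σ 1 kl.2 = (5 * σ 3 n + (1 - 6 * n) * σ 1 n) / 12 := by
  rw [← sum_quadruples_mul, sum_quadruples_mul_eq_sum_divisors, natCast_sigma_apply,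
    natCast_sigma_apply, mul_sum, mul_sum, ← sum_add_distrib, sum_div]
  exact sum_congr rfl fun _ _ => by ring

/-- The Ramanujan identity `q·(d/dq)G₂ = (5/6)G₄ − 2G₂²` in `ℚ[[q]]`;
in particular `B₀ = −2G₂² + (5/6)G₄` equals `q·(d/dq)G₂`. -/
theorem stmt_12 :
    PowerSeries.mk (fun n => (n : ℚ) * PowerSeries.coeff (R := ℚ) n stmt12G2) =
      PowerSeries.C (R := ℚ) (5 / 6) * stmt12G4 - 2 * stmt12G2 ^ 2 := by
  set E₂ : PowerSeries ℚ := PowerSeries.mk fun n => (σ 1 n : ℚ)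
  set E₄ : PowerSeries ℚ := PowerSeries.mk fun n => (σ 3 n : ℚ)
  have hG₂ : stmt12G2 = PowerSeries.C (-1 / 24) + E₂ := by
    ext n
    rcases eq_or_ne n 0 with rfl | hn <;> simp [stmt12G2, E₂, PowerSeries.coeff_C, *]
  have hG₄ : stmt12G4 = PowerSeries.C (1 / 240) + E₄ := by
    ext n
    rcases eq_or_ne n 0 with rfl | hn <;> simp [stmt12G4, E₄, PowerSeries.coeff_C, *]
  have hRHS : PowerSeries.C (5 / 6) * stmt12G4 - 2 * stmt12G2 ^ 2 =
      PowerSeries.C (5 / 6) * E₄ + PowerSeries.C (1 / 6) * E₂ - PowerSeries.C 2 * (E₂ * E₂) := by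
    have hconst : PowerSeries.C (5 / 6) * PowerSeries.C (1 / 240) =
        2 * PowerSeries.C (-1 / 24 : ℚ) ^ 2 := by
      rw [← map_mul, ← map_pow, ← map_ofNat PowerSeries.C 2, ← map_mul]
      norm_num
    have hlin : PowerSeries.C (1 / 6 : ℚ) = -4 * PowerSeries.C (-1 / 24) := by
      rw [← map_ofNat PowerSeries.C 4, ← map_neg, ← map_mul]
      norm_num
    rw [hG₂, hG₄, map_ofNat]
    linear_combination hconst - hlin * E₂
  ext n
  rw [hRHS, PowerSeries.coeff_mk, map_sub, map_add, PowerSeries.coeff_C_mul,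
    PowerSeries.coeff_C_mul, PowerSeries.coeff_C_mul, PowerSeries.coeff_mul]
  simp only [E₂, E₄, PowerSeries.coeff_mk]
  rw [sum_antidiagonal_sigma_one_mul_sigma_one]
  rcases eq_or_ne n 0 with rfl | hn
  · simp
  · rw [stmt12G2, PowerSeries.coeff_mk, if_neg hn]
    ring
end
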